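/- Let d ≥ 2, let D ∈ ℝ^{d×d} be a diagonal positive semidefinite matrix with largest diagonal entry D_max, and let n ≥ 1 be a real number. Let σ denote the uniform surface measure on the unit sphere S^{d−1} ⊂ ℝ^d, and define the normalized densities p(x) = exp(xᵀDx) / ∫_{S^{d−1}} exp(yᵀDy) dσ(y) and q(x) = (xᵀ(I + D/n)x)^n / ∫_{S^{d−1}} (yᵀ(I + D/n)y)^n dσ(y). Then for every x ∈ S^{d−1}, both p(x)/q(x) ≤ exp(D_max²/(2n)) and q(x)/p(x) ≤ exp(D_max²/(2n)). -/

import Mathlib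

/-!
With `T(x) = xᵀDx ∈ [0, D_max]` on the sphere and `xᵀ(I + D/n)x = 1 + T(x)/n`, the two unnormalized
densities are `g = exp ∘ T` and `f = (1 + T/n)^n`. For `t ≥ 0` the inequalities
`t - t²/2 ≤ log (1 + t) ≤ t` give `f ≤ g ≤ exp (D_max²/(2n)) f` pointwise, hence also between
the integrals, and each ratio of normalized densities is then a pointwise ratio times a ratio of
integrals, one factor at most `1` and the other at most `exp (D_max²/(2n))`.
-/

open Matrix Real MeasureTheory

namespace Real

lemma sub_sq_div_two_le_log_one_add {u : ℝ} (hu : 0 ≤ u) : u - u ^ 2 / 2 ≤ log (1 + u) := by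
  refine le_trans ?_ (le_log_one_add_of_nonneg hu)
  rw [le_div_iff₀ (by linarith)]
  nlinarith [pow_nonneg hu 3]

lemma one_add_div_rpow_le_exp {t n : ℝ} (ht : 0 ≤ t) (hn : 0 < n) : (1 + t / n) ^ n ≤ exp t := by
  have hpos : 0 < 1 + t / n := by positivity
  rw [rpow_def_of_pos hpos, exp_le_exp]
  calc log (1 + t / n) * n ≤ t / n * n := by gcongr; linarith [log_le_sub_one_of_pos hpos]
    _ = t := div_mul_cancel₀ t hn.ne'

lemma exp_le_exp_sq_div_mul_one_add_div_rpow {t M n : ℝ} (ht : 0 ≤ t) (htM : t ≤ M) (hn : 0 < n) :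
    exp t ≤ exp (M ^ 2 / (2 * n)) * (1 + t / n) ^ n := by
  have hlog := sub_sq_div_two_le_log_one_add (div_nonneg ht hn.le)
  calc exp t = exp (t ^ 2 / (2 * n) + (t / n - (t / n) ^ 2 / 2) * n) := by
        congr 1; field_simp; ring
    _ ≤ exp (M ^ 2 / (2 * n) + log (1 + t / n) * n) := by gcongr
    _ = exp (M ^ 2 / (2 * n)) * (1 + t / n) ^ n := by
        rw [exp_add, rpow_def_of_pos (by positivity)]

end Real

lemma div_div_div_le_mul {a b A B C₁ C₂ : ℝ} (hb : 0 ≤ b) (hA : 0 ≤ A) (hB : 0 ≤ B)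
    (hC₁ : 0 ≤ C₁) (hC₂ : 0 ≤ C₂) (hab : a ≤ C₁ * b) (hBA : B ≤ C₂ * A) :
    a / A / (b / B) ≤ C₁ * C₂ := by
  rw [div_div_eq_mul_div, div_mul_eq_mul_div, div_div]
  refine div_le_of_le_mul₀ (by positivity) (by positivity) ?_
  calc a * B ≤ (C₁ * b) * (C₂ * A) := mul_le_mul hab hBA hB (by positivity)
    _ = C₁ * C₂ * (A * b) := by ring

section NormalizedDensity

variable {α : Type*} [MeasurableSpace α] {μ : Measure α} {f g : α → ℝ} {C : ℝ}

/-- The normalizing integrals may vanish: division by zero yields zero, so the ratio is then `0`. -/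
theorem div_integral_ratio_le_of_le_of_le_mul (hf : Integrable f μ) (hg : Integrable g μ)
    (hf0 : 0 ≤ f) (hfg : f ≤ g) (hgf : ∀ y, g y ≤ C * f y) (hC : 0 ≤ C) :
    ∀ x, (g x / ∫ y, g y ∂μ) / (f x / ∫ y, f y ∂μ) ≤ C ∧
      (f x / ∫ y, f y ∂μ) / (g x / ∫ y, g y ∂μ) ≤ C := by
  have hg0 : 0 ≤ g := hf0.trans hfg
  have hfg_int : ∫ y, f y ∂μ ≤ ∫ y, g y ∂μ := integral_mono hf hg hfg
  have hgf_int : ∫ y, g y ∂μ ≤ C * ∫ y, f y ∂μ := by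
    rw [← integral_const_mul]
    exact integral_mono hg (hf.const_mul C) hgf
  have hIf : 0 ≤ ∫ y, f y ∂μ := integral_nonneg hf0
  have hIg : 0 ≤ ∫ y, g y ∂μ := integral_nonneg hg0
  intro x
  constructor
  · simpa only [mul_one] using
      div_div_div_le_mul (hf0 x) hIg hIf hC zero_le_one (hgf x) (by rwa [one_mul])
  · simpa only [one_mul] using
      div_div_div_le_mul (hg0 x) hIf hIg zero_le_one hC (by rw [one_mul]; exact hfg x) hgf_int

end NormalizedDensity

namespace Matrix

variable {ι R : Type*} [Fintype ι]

lemma dotProduct_one_add_smul_mulVec [CommRing R] [DecidableEq ι] (D : Matrix ι ι R) (c : R)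
    (v : ι → R) : v ⬝ᵥ ((1 + c • D) *ᵥ v) = v ⬝ᵥ v + c * (v ⬝ᵥ (D *ᵥ v)) := by
  rw [add_mulVec, one_mulVec, dotProduct_add, smul_mulVec, dotProduct_smul, smul_eq_mul]

namespace IsDiag

variable [CommSemiring R] {D : Matrix ι ι R}

lemma dotProduct_mulVec_self (hD : D.IsDiag) (v : ι → R) :
    v ⬝ᵥ (D *ᵥ v) = ∑ i, D i i * v i ^ 2 := by
  classical
  refine Finset.sum_congr rfl fun i _ => ?_
  conv_lhs => rw [← hD.diagonal_diag, mulVec_diagonal, diag_apply]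
  ring

variable [LinearOrder R] [IsStrictOrderedRing R] [ExistsAddOfLE R]

lemma dotProduct_mulVec_self_nonneg (hD : D.IsDiag) (hD0 : ∀ i, 0 ≤ D i i) (v : ι → R) :
    0 ≤ v ⬝ᵥ (D *ᵥ v) := by
  rw [hD.dotProduct_mulVec_self]
  exact Finset.sum_nonneg fun i _ => mul_nonneg (hD0 i) (sq_nonneg _)

lemma dotProduct_mulVec_self_le (hD : D.IsDiag) {M : R} (hM : ∀ i, D i i ≤ M) (v : ι → R) :
    v ⬝ᵥ (D *ᵥ v) ≤ M * (v ⬝ᵥ v) := by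
  rw [hD.dotProduct_mulVec_self, dotProduct, Finset.mul_sum]
  exact Finset.sum_le_sum fun i _ => by
    rw [← mul_assoc, mul_assoc, ← sq]
    exact mul_le_mul_of_nonneg_right (hM i) (sq_nonneg _)

end IsDiag

end Matrix

lemma EuclideanSpace.dotProduct_self_eq_one_of_mem_sphere {ι : Type*} [Fintype ι]
    {x : EuclideanSpace ℝ ι} (hx : x ∈ Metric.sphere (0 : EuclideanSpace ℝ ι) 1) :
    x ⬝ᵥ x = 1 := by
  have h : inner ℝ x x = ‖x‖ ^ 2 := real_inner_self_eq_norm_sq x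
  rwa [EuclideanSpace.inner_eq_star_dotProduct, star_trivial, mem_sphere_zero_iff_norm.mp hx,
    one_pow] at h

theorem stmt_2_general (d : ℕ) (D : Matrix (Fin d) (Fin d) ℝ)
    (hdiag : D.IsDiag) (hpsd : ∀ i, 0 ≤ D i i)
    (Dmax : ℝ) (hle : ∀ i, D i i ≤ Dmax)
    (n : ℝ) (hn : 1 ≤ n)
    (σ : Measure (Metric.sphere (0 : EuclideanSpace ℝ (Fin d)) 1))
    (hσ : σ = (volume : Measure (EuclideanSpace ℝ (Fin d))).toSphere)
    (p q : Metric.sphere (0 : EuclideanSpace ℝ (Fin d)) 1 → ℝ)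
    (hp : ∀ x, p x = Real.exp ((x : EuclideanSpace ℝ (Fin d)) ⬝ᵥ (D *ᵥ (x : EuclideanSpace ℝ (Fin d)))) /
        ∫ y, Real.exp ((y : EuclideanSpace ℝ (Fin d)) ⬝ᵥ (D *ᵥ (y : EuclideanSpace ℝ (Fin d)))) ∂σ)
    (hq : ∀ x, q x = ((x : EuclideanSpace ℝ (Fin d)) ⬝ᵥ ((1 + n⁻¹ • D) *ᵥ (x : EuclideanSpace ℝ (Fin d)))) ^ n /
        ∫ y, ((y : EuclideanSpace ℝ (Fin d)) ⬝ᵥ ((1 + n⁻¹ • D) *ᵥ (y : EuclideanSpace ℝ (Fin d)))) ^ n ∂σ) :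
    ∀ x, p x / q x ≤ Real.exp (Dmax ^ 2 / (2 * n)) ∧
      q x / p x ≤ Real.exp (Dmax ^ 2 / (2 * n)) := by
  have hn0 : 0 < n := by linarith
  have hT : ∀ y : Metric.sphere (0 : EuclideanSpace ℝ (Fin d)) 1,
      0 ≤ (y : EuclideanSpace ℝ (Fin d)) ⬝ᵥ (D *ᵥ (y : EuclideanSpace ℝ (Fin d))) ∧
        (y : EuclideanSpace ℝ (Fin d)) ⬝ᵥ (D *ᵥ (y : EuclideanSpace ℝ (Fin d))) ≤ Dmax := fun y =>
    ⟨hdiag.dotProduct_mulVec_self_nonneg hpsd _, (hdiag.dotProduct_mulVec_self_le hle _).trans_eq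
      (by rw [EuclideanSpace.dotProduct_self_eq_one_of_mem_sphere y.2, mul_one])⟩
  have hQ : ∀ y : Metric.sphere (0 : EuclideanSpace ℝ (Fin d)) 1,
      (y : EuclideanSpace ℝ (Fin d)) ⬝ᵥ ((1 + n⁻¹ • D) *ᵥ (y : EuclideanSpace ℝ (Fin d))) =
        1 + (y : EuclideanSpace ℝ (Fin d)) ⬝ᵥ (D *ᵥ (y : EuclideanSpace ℝ (Fin d))) / n := by
    intro y
    rw [dotProduct_one_add_smul_mulVec, EuclideanSpace.dotProduct_self_eq_one_of_mem_sphere y.2,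
      inv_mul_eq_div]
  have hint : ∀ F : Metric.sphere (0 : EuclideanSpace ℝ (Fin d)) 1 → ℝ, Continuous F →
      Integrable F σ := fun F hF => by
    subst hσ
    exact integrableOn_univ.mp (hF.continuousOn.integrableOn_compact isCompact_univ)
  simp only [hp, hq]
  refine div_integral_ratio_le_of_le_of_le_mul (hint _ ?_) (hint _ ?_)
    (fun y => ?_) (fun y => ?_) (fun y => ?_) (exp_pos _).le
  · exact Continuous.rpow_const (by fun_prop) fun _ => Or.inr hn0.le
  · fun_prop
  · have := (hT y).1
    exact rpow_nonneg (by rw [hQ]; positivity) n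
  · simpa only [hQ] using one_add_div_rpow_le_exp (hT y).1 hn0
  · simpa only [hQ] using exp_le_exp_sq_div_mul_one_add_div_rpow (hT y).1 (hT y).2 hn0

theorem stmt_2 (d : ℕ) (hd : 2 ≤ d) (D : Matrix (Fin d) (Fin d) ℝ)
    (hdiag : D.IsDiag) (hpsd : ∀ i, 0 ≤ D i i)
    (Dmax : ℝ) (hle : ∀ i, D i i ≤ Dmax) (hmem : ∃ i, D i i = Dmax)
    (n : ℝ) (hn : 1 ≤ n)
    (σ : Measure (Metric.sphere (0 : EuclideanSpace ℝ (Fin d)) 1))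
    (hσ : σ = (volume : Measure (EuclideanSpace ℝ (Fin d))).toSphere)
    (p q : Metric.sphere (0 : EuclideanSpace ℝ (Fin d)) 1 → ℝ)
    (hp : ∀ x, p x = Real.exp ((x : EuclideanSpace ℝ (Fin d)) ⬝ᵥ (D *ᵥ (x : EuclideanSpace ℝ (Fin d)))) /
        ∫ y, Real.exp ((y : EuclideanSpace ℝ (Fin d)) ⬝ᵥ (D *ᵥ (y : EuclideanSpace ℝ (Fin d)))) ∂σ)
    (hq : ∀ x, q x = ((x : EuclideanSpace ℝ (Fin d)) ⬝ᵥ ((1 + n⁻¹ • D) *ᵥ (x : EuclideanSpace ℝ (Fin d)))) ^ n /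
        ∫ y, ((y : EuclideanSpace ℝ (Fin d)) ⬝ᵥ ((1 + n⁻¹ • D) *ᵥ (y : EuclideanSpace ℝ (Fin d)))) ^ n ∂σ) :
    ∀ x, p x / q x ≤ Real.exp (Dmax ^ 2 / (2 * n)) ∧
      q x / p x ≤ Real.exp (Dmax ^ 2 / (2 * n)) :=
  stmt_2_general d D hdiag hpsd Dmax hle n hn σ hσ p q hp hq
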